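/- arXiv:2211.03655 — 2 statements merged into one kernel-verified Lean document; each statement's English description precedes it below -/
import Mathlib

section
/- Let 0 < p < q < ∞, α > 1, and 0 ≤ r ≤ 1. If the inequality (∫_𝔻 |f(rz)|^q dA_α(z))^{1/q} ≤ (∫_𝔻 |f(z)|^p dA_α(z))^{1/p} holds for every holomorphic f on the unit disk 𝔻 with ∫_𝔻 |f(z)|^p dA_α(z) < ∞ (in particular for every function f_ε(z) = 1 + εz with ε > 0 small), then r ≤ √(p/q). -/
open MeasureTheory Metric Set
open scoped ENNReal

/-- The weighted Bergman measure `dA_α` on the unit disk: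
density `((α-1)/π)(1-|z|²)^(α-2)` with respect to Lebesgue area measure. -/
noncomputable def bergmanMeasure (α : ℝ) : Measure ℂ :=
  (volume.restrict (ball (0 : ℂ) 1)).withDensity
    (fun z => ENNReal.ofReal ((α - 1) / Real.pi * (1 - ‖z‖ ^ 2) ^ (α - 2)))

namespace BergmanAux

noncomputable def w (α : ℝ) (z : ℂ) : ℝ := (α - 1) / Real.pi * (1 - ‖z‖ ^ 2) ^ (α - 2)

lemma bergman_eq (α : ℝ) : bergmanMeasure α =
    (volume.restrict (ball (0 : ℂ) 1)).withDensity (fun z => ENNReal.ofReal (w α z)) := rfl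
lemma measurable_w (α : ℝ) : Measurable (w α) := by
  unfold w
  exact measurable_const.mul ((measurable_const.sub (measurable_norm.pow_const 2)).pow measurable_const)
lemma w_pos {α : ℝ} (hα : 1 < α) {z : ℂ} (hz : ‖z‖ < 1) : 0 < w α z := by
  unfold w
  apply mul_pos (div_pos (by linarith) Real.pi_pos)
  apply Real.rpow_pos_of_pos
  nlinarith [norm_nonneg z]
lemma radial_integral {α s : ℝ} (hα : 1 < α) (hs0 : 0 < s) (hs : s < 1) :
    ∫ y in (0:ℝ)..s, y * (1 - y^2) ^ (α-2) = (1 - (1-s^2) ^ (α-1)) / (2*(α-1)) := by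
  have hα1 : α - 1 ≠ 0 := by intro h; linarith [sub_eq_zero.mp h]
  set F : ℝ → ℝ := fun y => (1-y^2) ^ (α-1) * (-1/(2*(α-1))) with hF
  have hderiv : ∀ y ∈ uIcc (0:ℝ) s, HasDerivAt F (y * (1 - y^2) ^ (α-2)) y := by
    intro y hy
    rw [uIcc_of_le hs0.le] at hy
    have hy2 : (1:ℝ) - y^2 ≠ 0 := by nlinarith [hy.1, hy.2]
    have h1 : HasDerivAt (fun y : ℝ => 1 - y^2) (-(2*y)) y := by
      simpa using ((hasDerivAt_pow 2 y).const_sub 1)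
    have h2 := (h1.rpow_const (p := α-1) (Or.inl hy2)).mul_const (-1/(2*(α-1)))
    refine h2.congr_deriv ?_
    have e : α - 1 - 1 = α - 2 := by ring
    rw [e]; field_simp
  have hcont : ContinuousOn (fun y : ℝ => y * (1 - y^2) ^ (α-2)) (uIcc 0 s) := by
    apply continuousOn_id.mul
    apply ContinuousOn.rpow_const (by fun_prop)
    intro y hy
    rw [uIcc_of_le hs0.le] at hy
    left; nlinarith [hy.1, hy.2]
  rw [intervalIntegral.integral_eq_sub_of_hasDerivAt hderiv (hcont.intervalIntegrable)]
  rw [hF]; simp only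
  rw [show (1:ℝ) - 0^2 = 1 by norm_num, Real.one_rpow]
  field_simp; ring

lemma integral_ball_w {α s : ℝ} (hα : 1 < α) (hs0 : 0 < s) (hs : s < 1) :
    ∫ z in ball (0:ℂ) s, w α z = 1 - (1-s^2) ^ (α-1) := by
  classical
  set Ws : ℝ → ℝ := fun y => if y < s then (α - 1) / Real.pi * (1 - y ^ 2) ^ (α - 2) else 0 with hWs
  have h1 : ∫ z in ball (0:ℂ) s, w α z = ∫ z : ℂ, Ws ‖z‖ := by
    rw [← integral_indicator measurableSet_ball]
    congr 1
    funext z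
    simp only [indicator_apply, mem_ball_zero_iff, hWs]
    by_cases h : ‖z‖ < s <;> simp [h, w]
  rw [h1, integral_fun_norm_addHaar volume Ws]
  have hdim : Module.finrank ℝ ℂ = 2 := Complex.finrank_real_complex
  rw [hdim]
  have hvol : volume.real (ball (0:ℂ) 1) = Real.pi := by
    simp [Measure.real, Complex.volume_ball]
  rw [hvol]
  have h2 : ∫ y in Ioi (0:ℝ), y ^ (2-1) • Ws y
      = ∫ y in Ioo (0:ℝ) s, y * ((α - 1) / Real.pi * (1 - y ^ 2) ^ (α - 2)) := by
    have e : (fun y : ℝ => y ^ (2-1) • Ws y)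
        = (Iio s).indicator (fun y => y * ((α - 1) / Real.pi * (1 - y ^ 2) ^ (α - 2))) := by
      funext y
      simp only [indicator_apply, mem_Iio, hWs]
      by_cases h : y < s <;> simp [h]
    rw [e, setIntegral_indicator measurableSet_Iio, Ioi_inter_Iio]
  rw [h2, ← integral_Ioc_eq_integral_Ioo, ← intervalIntegral.integral_of_le hs0.le]
  have h3 : ∀ y : ℝ, y * ((α - 1) / Real.pi * (1 - y ^ 2) ^ (α - 2))
      = ((α - 1) / Real.pi) * (y * (1 - y ^ 2) ^ (α - 2)) := fun y => by ring
  simp_rw [h3]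
  rw [intervalIntegral.integral_const_mul, radial_integral hα hs0 hs]
  have hα1 : α - 1 ≠ 0 := by intro h; linarith [sub_eq_zero.mp h]
  have hpi := Real.pi_ne_zero
  field_simp
  ring_nf
  simp only [mul_assoc, mul_inv_cancel₀ hpi, mul_one]
  ring

lemma integrableOn_w {α s : ℝ} (hα : 1 < α) (hs0 : 0 < s) (hs : s < 1) :
    IntegrableOn (w α) (ball (0:ℂ) s) volume := by
  set M : ℝ := (α - 1) / Real.pi * max ((1-s^2) ^ (α-2)) 1 with hM
  apply Integrable.mono' (g := fun _ => M)
    (integrableOn_const measure_ball_lt_top.ne)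
    (measurable_w α).aestronglyMeasurable
  filter_upwards [ae_restrict_mem measurableSet_ball] with z hz
  rw [mem_ball_zero_iff] at hz
  have hz1 : ‖z‖ < 1 := lt_trans hz hs
  rw [Real.norm_eq_abs, abs_of_nonneg (w_pos hα hz1).le]
  unfold w
  apply mul_le_mul_of_nonneg_left _ (div_nonneg (by linarith) Real.pi_pos.le)
  have ht0 : (0:ℝ) < 1 - s^2 := by nlinarith
  have ht1 : 1 - s^2 ≤ 1 - ‖z‖^2 := by nlinarith [norm_nonneg z]
  have ht2 : 1 - ‖z‖^2 ≤ 1 := by nlinarith [norm_nonneg z]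
  rcases le_or_gt 0 (α - 2) with h | h
  · exact le_trans (Real.rpow_le_one (by linarith) ht2 h) (le_max_right _ _)
  · exact le_trans (Real.rpow_le_rpow_of_nonpos ht0 ht1 h.le) (le_max_left _ _)

lemma measure_ball_eq {α s : ℝ} (hα : 1 < α) (hs0 : 0 < s) (hs : s < 1) :
    bergmanMeasure α (ball (0:ℂ) s) = ENNReal.ofReal (1 - (1-s^2) ^ (α-1)) := by
  rw [bergman_eq, withDensity_apply _ measurableSet_ball,
    Measure.restrict_restrict measurableSet_ball,
    inter_eq_left.mpr (ball_subset_ball hs.le),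
    ← ofReal_integral_eq_lintegral_ofReal (integrableOn_w hα hs0 hs) ?_,
    integral_ball_w hα hs0 hs]
  filter_upwards [ae_restrict_mem measurableSet_ball] with z hz
  exact (w_pos hα (lt_trans (mem_ball_zero_iff.mp hz) hs)).le

lemma measure_compl_ball {α : ℝ} : bergmanMeasure α ((ball (0:ℂ) 1)ᶜ) = 0 := by
  apply withDensity_absolutelyContinuous (volume.restrict (ball (0:ℂ) 1)) _
  rw [Measure.restrict_apply (measurableSet_ball.compl), compl_inter_self]
  exact measure_empty

lemma mass {α : ℝ} (hα : 1 < α) : bergmanMeasure α Set.univ = 1 := by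
  set sn : ℕ → ℝ := fun n => 1 - 1/(n+2) with hsn
  have hsn0 : ∀ n, 0 < sn n := by
    intro n
    have h2 : (2:ℝ) ≤ (n:ℝ) + 2 := by linarith [Nat.cast_nonneg (α := ℝ) n]
    have : 1/((n:ℝ)+2) ≤ 1/2 := by
      apply div_le_div_of_nonneg_left (by norm_num) (by norm_num) h2
    simp only [hsn]; linarith
  have hsn1 : ∀ n, sn n < 1 := by
    intro n
    have : 0 < 1/((n:ℝ)+2) := by positivity
    simp only [hsn]; linarith
  have hmono : Monotone (fun n => ball (0:ℂ) (sn n)) := by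
    intro m n hmn
    apply ball_subset_ball
    simp only [hsn]
    have : ((m:ℝ)+2) ≤ ((n:ℝ)+2) := by exact_mod_cast by omega
    have := one_div_le_one_div_of_le (by positivity : (0:ℝ) < (m:ℝ)+2) this
    linarith
  have hunion : ⋃ n, ball (0:ℂ) (sn n) = ball (0:ℂ) 1 := by
    apply subset_antisymm
    · exact iUnion_subset fun n => ball_subset_ball (hsn1 n).le
    · intro z hz
      rw [mem_ball_zero_iff] at hz
      obtain ⟨n, hn⟩ := exists_nat_gt (1/(1-‖z‖))
      refine mem_iUnion.mpr ⟨n, mem_ball_zero_iff.mpr ?_⟩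
      have h1 : 0 < 1 - ‖z‖ := by linarith
      have h2 : 1/(1-‖z‖) < (n:ℝ) + 2 := by
        have : (0:ℝ) < 2 := by norm_num
        linarith
      have h3 : 1/((n:ℝ)+2) < 1-‖z‖ := by
        rw [div_lt_iff₀ (by positivity)] at h2 ⊢
        · nlinarith
      simp only [hsn]; linarith
  have hlim := tendsto_measure_iUnion_atTop (μ := bergmanMeasure α) hmono
  rw [hunion] at hlim
  have hball : bergmanMeasure α (ball (0:ℂ) 1) = bergmanMeasure α Set.univ := by
    apply measure_congr
    rw [ae_eq_univ]
    exact measure_compl_ball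
  rw [hball] at hlim
  have hval : ∀ n, bergmanMeasure α (ball (0:ℂ) (sn n))
      = ENNReal.ofReal (1 - (1-(sn n)^2) ^ (α-1)) := fun n =>
    measure_ball_eq hα (hsn0 n) (hsn1 n)
  have hlim2 : Filter.Tendsto (fun n => bergmanMeasure α (ball (0:ℂ) (sn n)))
      Filter.atTop (nhds 1) := by
    simp_rw [hval]
    have h1 : Filter.Tendsto sn Filter.atTop (nhds 1) := by
      have : Filter.Tendsto (fun n : ℕ => 1/((n:ℝ)+2)) Filter.atTop (nhds 0) := by
        apply Filter.Tendsto.div_atTop tendsto_const_nhds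
        exact Filter.tendsto_atTop_add_const_right _ 2 tendsto_natCast_atTop_atTop
      simpa [hsn] using tendsto_const_nhds.sub this
    have h2 : Filter.Tendsto (fun n => 1 - (1-(sn n)^2) ^ (α-1)) Filter.atTop (nhds 1) := by
      have h3 : Filter.Tendsto (fun n => 1-(sn n)^2) Filter.atTop (nhds 0) := by
        have := tendsto_const_nhds (x := (1:ℝ)) (f := Filter.atTop (α := ℕ)) |>.sub (h1.pow 2)
        simpa using this
      have h4 : Filter.Tendsto (fun x : ℝ => x ^ (α-1)) (nhds 0) (nhds 0) := by
        have hc : ContinuousAt (fun x : ℝ => x ^ (α-1)) 0 :=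
          Real.continuousAt_rpow_const 0 (α-1) (Or.inr (by linarith))
        have : (fun x : ℝ => x ^ (α-1)) 0 = 0 := Real.zero_rpow (by intro h; linarith [h])
        simpa [this] using hc.tendsto
      have := (h4.comp h3).const_sub 1
      simpa using this
    have := (ENNReal.continuous_ofReal.tendsto 1).comp h2
    simpa [Function.comp_def] using this
  have := tendsto_nhds_unique hlim hlim2
  rw [this]

lemma probMeasure {α : ℝ} (hα : 1 < α) : IsProbabilityMeasure (bergmanMeasure α) := ⟨mass hα⟩

section
variable {α : ℝ} (hα : 1 < α)

lemma ae_ball {α : ℝ} : ∀ᵐ z ∂(bergmanMeasure α), ‖z‖ < 1 := by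
  have h1 : ∀ᵐ z ∂(volume.restrict (ball (0:ℂ) 1)), ‖z‖ < 1 := by
    filter_upwards [ae_restrict_mem measurableSet_ball] with z hz
    exact mem_ball_zero_iff.mp hz
  exact h1.filter_mono (withDensity_absolutelyContinuous _ _).ae_le

lemma integrable_of_bound {α : ℝ} (hα : 1 < α) {g : ℂ → ℝ} (hg : Measurable g) (M : ℝ)
    (h : ∀ z : ℂ, ‖z‖ < 1 → ‖g z‖ ≤ M) : Integrable g (bergmanMeasure α) := by
  haveI : IsProbabilityMeasure (bergmanMeasure α) := ⟨mass hα⟩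
  apply Integrable.mono' (integrable_const M) hg.aestronglyMeasurable
  filter_upwards [ae_ball] with z hz
  exact h z hz

lemma map_neg_eq {α : ℝ} : Measure.map (fun z : ℂ => -z) (bergmanMeasure α) = bergmanMeasure α := by
  have hneg : Measurable (fun z : ℂ => -z) := measurable_neg
  ext s hs
  rw [Measure.map_apply hneg hs, bergman_eq, withDensity_apply _ (hneg hs),
    withDensity_apply _ hs, Measure.restrict_restrict (hneg hs),
    Measure.restrict_restrict hs]
  have hset : (fun z : ℂ => -z) ⁻¹' s ∩ ball 0 1 = (fun z : ℂ => -z) ⁻¹' (s ∩ ball 0 1) := by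
    ext z
    simp [mem_ball_zero_iff]
  rw [hset]
  have hmp : MeasurePreserving (fun z : ℂ => -z) volume volume :=
    Measure.measurePreserving_neg volume
  have hemb : MeasurableEmbedding (fun z : ℂ => -z) :=
    (Homeomorph.neg ℂ).measurableEmbedding
  have hcongr : ∫⁻ a in (fun z : ℂ => -z) ⁻¹' (s ∩ ball 0 1), ENNReal.ofReal (w α a) ∂volume
      = ∫⁻ a in (fun z : ℂ => -z) ⁻¹' (s ∩ ball 0 1), ENNReal.ofReal (w α (-a)) ∂volume := by
    apply lintegral_congr
    intro a
    simp [w]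
  rw [hcongr]
  exact hmp.setLIntegral_comp_preimage_emb hemb (fun z => ENNReal.ofReal (w α z)) (s ∩ ball 0 1)

lemma integral_re_eq_zero {α : ℝ} (hα : 1 < α) : ∫ z, z.re ∂(bergmanMeasure α) = 0 := by
  have h1 : ∫ z, z.re ∂(bergmanMeasure α)
      = ∫ z, (-z).re ∂(bergmanMeasure α) := by
    conv_lhs => rw [← map_neg_eq (α := α)]
    rw [integral_map measurable_neg.aemeasurable Complex.measurable_re.aestronglyMeasurable]
  have h2 : ∫ z, (-z).re ∂(bergmanMeasure α) = - ∫ z, z.re ∂(bergmanMeasure α) := by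
    simp_rw [Complex.neg_re]
    exact integral_neg _
  linarith [h1, h2]

end
lemma integrable_re_sq {α : ℝ} (hα : 1 < α) :
    Integrable (fun z : ℂ => z.re ^ 2) (bergmanMeasure α) := by
  apply integrable_of_bound hα (Complex.measurable_re.pow_const 2) 1
  intro z hz
  have h1 : |z.re| ≤ 1 := le_trans (Complex.abs_re_le_norm z) hz.le
  rw [Real.norm_eq_abs, abs_pow]
  calc |z.re| ^ 2 ≤ 1 ^ 2 := pow_le_pow_left₀ (abs_nonneg _) h1 2
    _ = 1 := one_pow 2

lemma sigma2_pos {α : ℝ} (hα : 1 < α) : 0 < ∫ z, z.re ^ 2 ∂(bergmanMeasure α) := by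
  haveI : IsProbabilityMeasure (bergmanMeasure α) := ⟨mass hα⟩
  set R : Set ℂ := ball (2⁻¹ : ℂ) 8⁻¹ with hR
  have hRprop : ∀ z ∈ R, 3/8 ≤ z.re ∧ ‖z‖ ≤ 5/8 := by
    intro z hz
    rw [hR, mem_ball_iff_norm] at hz
    have h1 : |z.re - 2⁻¹| ≤ ‖z - 2⁻¹‖ := by
      have := Complex.abs_re_le_norm (z - 2⁻¹)
      simpa using this
    have h2 : ‖z‖ ≤ ‖z - 2⁻¹‖ + ‖(2⁻¹ : ℂ)‖ := by
      calc ‖z‖ = ‖(z - 2⁻¹) + 2⁻¹‖ := by ring_nf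
        _ ≤ _ := norm_add_le _ _
    have h3 : ‖(2⁻¹ : ℂ)‖ = 2⁻¹ := by
      rw [show ((2:ℂ)⁻¹) = ((2⁻¹ : ℝ) : ℂ) by norm_num, Complex.norm_real]
      norm_num
    constructor
    · have := abs_le.mp h1
      linarith [this.1]
    · rw [h3] at h2; linarith
  have hRsub : R ⊆ ball (0:ℂ) 1 := by
    intro z hz
    rw [mem_ball_zero_iff]
    linarith [(hRprop z hz).2]
  -- positive measure of R
  have hc0 : (0:ℝ) < (α - 1) / Real.pi * min ((2⁻¹ : ℝ) ^ (α-2)) 1 := by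
    apply mul_pos (div_pos (by linarith) Real.pi_pos)
    apply lt_min (Real.rpow_pos_of_pos (by norm_num) _) one_pos
  set c0 : ℝ := (α - 1) / Real.pi * min ((2⁻¹ : ℝ) ^ (α-2)) 1 with hc0def
  have hwlb : ∀ z ∈ R, ENNReal.ofReal c0 ≤ ENNReal.ofReal (w α z) := by
    intro z hz
    apply ENNReal.ofReal_le_ofReal
    have h5 : ‖z‖ ≤ 5/8 := (hRprop z hz).2
    have ht1 : (2⁻¹:ℝ) ≤ 1 - ‖z‖^2 := by nlinarith [norm_nonneg z]
    have ht2 : 1 - ‖z‖^2 ≤ 1 := by nlinarith [norm_nonneg z]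
    unfold w
    apply mul_le_mul_of_nonneg_left _ (div_nonneg (by linarith) Real.pi_pos.le)
    rcases le_or_gt 0 (α - 2) with h | h
    · exact le_trans (min_le_left _ _) (Real.rpow_le_rpow (by norm_num) ht1 h)
    · refine le_trans (min_le_right _ _) ?_
      exact Real.one_le_rpow_of_pos_of_le_one_of_nonpos (by nlinarith [norm_nonneg z]) ht2 h.le
  have hμR : 0 < bergmanMeasure α R := by
    rw [bergman_eq, withDensity_apply _ measurableSet_ball,
      Measure.restrict_restrict measurableSet_ball, inter_eq_left.mpr hRsub]
    calc (0:ℝ≥0∞) < ENNReal.ofReal c0 * volume R := by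
          apply ENNReal.mul_pos
          · simp [ENNReal.ofReal_eq_zero, not_le, hc0]
          · exact (measure_ball_pos volume _ (by norm_num)).ne'
      _ = ∫⁻ _ in R, ENNReal.ofReal c0 ∂volume := by rw [setLIntegral_const]
      _ ≤ ∫⁻ z in R, ENNReal.ofReal (w α z) ∂volume := by
          apply setLIntegral_mono ((measurable_w α).ennreal_ofReal) hwlb
  have hμRtop : bergmanMeasure α R < ⊤ := measure_lt_top _ _
  have hμRr : 0 < (bergmanMeasure α R).toReal := ENNReal.toReal_pos hμR.ne' hμRtop.ne
  have hint := integrable_re_sq hα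
  have step1 : ∫ z in R, z.re ^ 2 ∂(bergmanMeasure α) ≤ ∫ z, z.re ^ 2 ∂(bergmanMeasure α) := by
    apply setIntegral_le_integral hint
    filter_upwards with z using sq_nonneg _
  have step2 : (bergmanMeasure α R).toReal * (3/8)^2 ≤ ∫ z in R, z.re ^ 2 ∂(bergmanMeasure α) := by
    have := setIntegral_mono_on (integrableOn_const (C := ((3:ℝ)/8)^2) hμRtop.ne)
      hint.integrableOn measurableSet_ball
      (fun z hz => by
        have h1 : (3:ℝ)/8 ≤ z.re := (hRprop z hz).1
        calc ((3:ℝ)/8)^2 ≤ z.re^2 := by nlinarith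
          _ = z.re^2 := rfl)
    calc (bergmanMeasure α R).toReal * (3/8)^2
        = ∫ _ in R, ((3:ℝ)/8)^2 ∂(bergmanMeasure α) := by rw [setIntegral_const, smul_eq_mul]; rfl
      _ ≤ _ := this
  calc (0:ℝ) < (bergmanMeasure α R).toReal * (3/8)^2 := by positivity
    _ ≤ _ := le_trans step2 step1

lemma abs_re_lt {z : ℂ} (hz : ‖z‖ < 1) : |z.re| ≤ 1 :=
  le_trans (Complex.abs_re_le_norm z) hz.le

lemma integrable_exp_re {α : ℝ} (hα : 1 < α) {c : ℝ} (hc : |c| ≤ 1) :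
    Integrable (fun z : ℂ => Real.exp (c * z.re)) (bergmanMeasure α) := by
  apply integrable_of_bound hα (by fun_prop) (Real.exp 1)
  intro z hz
  rw [Real.norm_eq_abs, abs_of_pos (Real.exp_pos _)]
  apply Real.exp_le_exp.mpr
  calc c * z.re ≤ |c * z.re| := le_abs_self _
    _ = |c| * |z.re| := abs_mul _ _
    _ ≤ 1 * 1 := mul_le_mul hc (abs_re_lt hz) (abs_nonneg _) zero_le_one
    _ = 1 := one_mul 1

lemma integrable_re {α : ℝ} (hα : 1 < α) :
    Integrable (fun z : ℂ => z.re) (bergmanMeasure α) := by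
  apply integrable_of_bound hα Complex.measurable_re 1
  intro z hz
  rw [Real.norm_eq_abs]
  exact abs_re_lt hz

lemma one_le_Phi {α : ℝ} (hα : 1 < α) {c : ℝ} (hc : |c| ≤ 1) :
    1 ≤ ∫ z, Real.exp (c * z.re) ∂(bergmanMeasure α) := by
  haveI : IsProbabilityMeasure (bergmanMeasure α) := ⟨mass hα⟩
  have h1 : ∫ z, (c * z.re + 1) ∂(bergmanMeasure α) = 1 := by
    rw [integral_add ((integrable_re hα).const_mul c) (integrable_const 1),
      integral_const_mul, integral_re_eq_zero hα, integral_const]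
    simp
  rw [← h1]
  apply integral_mono (((integrable_re hα).const_mul c).add (integrable_const 1))
    (integrable_exp_re hα hc)
  intro z
  exact Real.add_one_le_exp _

lemma moment_bound {α : ℝ} (hα : 1 < α) {t : ℝ} (ht : |t| ≤ 1) :
    |(∫ z, Real.exp (t * z.re) ∂(bergmanMeasure α)) - 1
      - t^2/2 * ∫ z, z.re^2 ∂(bergmanMeasure α)| ≤ 2/9 * |t|^3 := by
  haveI : IsProbabilityMeasure (bergmanMeasure α) := ⟨mass hα⟩
  have hI1 := integrable_exp_re hα ht
  have hIre := (integrable_re hα).const_mul t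
  have hIre2 := (integrable_re_sq hα).const_mul (t^2/2)
  have hIpoly : Integrable (fun z : ℂ => 1 + t * z.re + t^2/2 * z.re^2) (bergmanMeasure α) :=
    ((integrable_const 1).add hIre).add hIre2
  have hsplit : ∫ z, (Real.exp (t * z.re) - (1 + t * z.re + t^2/2 * z.re^2)) ∂(bergmanMeasure α)
      = (∫ z, Real.exp (t * z.re) ∂(bergmanMeasure α)) - 1
        - t^2/2 * ∫ z, z.re^2 ∂(bergmanMeasure α) := by
    rw [integral_sub hI1 hIpoly,
      integral_add (f := fun z : ℂ => 1 + t * z.re) ((integrable_const 1).add hIre) hIre2,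
      integral_add (f := fun _ : ℂ => (1:ℝ)) (integrable_const 1) hIre,
      integral_const_mul, integral_const_mul, integral_re_eq_zero hα, integral_const]
    simp
    ring
  rw [← hsplit]
  have hb := norm_integral_le_of_norm_le_const (μ := bergmanMeasure α)
    (f := fun z => Real.exp (t * z.re) - (1 + t * z.re + t^2/2 * z.re^2)) (C := 2/9 * |t|^3) ?_
  · rw [Real.norm_eq_abs] at hb
    rw [probReal_univ, mul_one] at hb
    exact hb
  · filter_upwards [ae_ball] with z hz
    have hx : |t * z.re| ≤ |t| := by
      rw [abs_mul]
      calc |t| * |z.re| ≤ |t| * 1 := by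
            apply mul_le_mul_of_nonneg_left (abs_re_lt hz) (abs_nonneg _)
        _ = |t| := mul_one _
    have hx1 : |t * z.re| ≤ 1 := hx.trans ht
    have hbnd := Real.exp_bound hx1 (n := 3) (by norm_num)
    have hsum : ∑ m ∈ Finset.range 3, (t * z.re)^m / m.factorial
        = 1 + t * z.re + t^2/2 * z.re^2 := by
      norm_num [Finset.sum_range_succ, Nat.factorial]
      ring
    rw [hsum] at hbnd
    norm_num [Nat.factorial] at hbnd
    rw [Real.norm_eq_abs]
    calc |Real.exp (t * z.re) - (1 + t * z.re + t^2/2 * z.re^2)| ≤ |t * z.re|^3 * (2/9) := by rw [abs_mul]; exact hbnd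
      _ ≤ |t|^3 * (2/9) := by
          apply mul_le_mul_of_nonneg_right _ (by norm_num)
          exact pow_le_pow_left₀ (abs_nonneg _) hx 3
      _ = 2/9 * |t|^3 := by ring


end BergmanAux

open BergmanAux in
theorem necessity_of_r_le_sqrt_p_div_q
    (p q α : ℝ) (hp : 0 < p) (hpq : p < q) (hα : 1 < α)
    (r : ℝ) (hr0 : 0 ≤ r) (hr1 : r ≤ 1)
    (H : ∀ f : ℂ → ℂ, DifferentiableOn ℂ f (ball (0 : ℂ) 1) →
      Integrable (fun z => ‖f z‖ ^ p) (bergmanMeasure α) →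
      (∫ z, ‖f ((r : ℂ) * z)‖ ^ q ∂(bergmanMeasure α)) ^ (1 / q) ≤
        (∫ z, ‖f z‖ ^ p ∂(bergmanMeasure α)) ^ (1 / p)) :
    r ≤ Real.sqrt (p / q) := by
  have hq : 0 < q := lt_trans hp hpq
  set σ2 : ℝ := ∫ z, z.re ^ 2 ∂(bergmanMeasure α) with hσ2
  have hσpos : 0 < σ2 := sigma2_pos hα
  set K : ℝ := q^2*σ2/2 + 2/9*q^3 with hK
  have hK0 : 0 ≤ K := by positivity
  set D : ℝ := p*(2/9*q^3 + K^2) + q*(2/9*p^3) with hD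
  have hD0 : 0 ≤ D := by positivity
  -- norm computation for exponentials
  have hnorm : ∀ (c : ℝ) (z : ℂ), ‖Complex.exp ((c:ℂ) * z)‖ = Real.exp (c * z.re) := by
    intro c z
    rw [Complex.norm_exp]
    congr 1
    simp [Complex.mul_re]
  have key : ∀ l : ℝ, 0 < l → l ≤ 1 → p*l ≤ 1 → q*l ≤ 1 →
      (σ2/2)*(p*q)*(q*r^2 - p) ≤ D * l := by
    intro l hl0 hl1 hpl hql
    set A : ℝ := ∫ z, Real.exp ((p*l) * z.re) ∂(bergmanMeasure α) with hA
    set B : ℝ := ∫ z, Real.exp ((q*r*l) * z.re) ∂(bergmanMeasure α) with hB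
    have hplabs : |p*l| ≤ 1 := by rw [abs_of_pos (by positivity)]; exact hpl
    have hqrl0 : 0 ≤ q*r*l := by positivity
    have hqrlabs : |q*r*l| ≤ 1 := by
      rw [abs_of_nonneg hqrl0]
      calc q*r*l ≤ q*1*l := by
            apply mul_le_mul_of_nonneg_right _ hl0.le
            exact mul_le_mul_of_nonneg_left hr1 hq.le
        _ = q*l := by ring
        _ ≤ 1 := hql
    have hqrlle : q*r*l ≤ q*l := by
      have h1 : q*r ≤ q := by
        calc q*r ≤ q*1 := mul_le_mul_of_nonneg_left hr1 hq.le
          _ = q := mul_one q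
      exact mul_le_mul_of_nonneg_right h1 hl0.le
    have hl32 : l^3 ≤ l^2 := pow_le_pow_of_le_one hl0.le hl1 (by norm_num)
    have hl43 : l^4 ≤ l^3 := pow_le_pow_of_le_one hl0.le hl1 (by norm_num)
    have hr3 : (q*r*l)^3 ≤ q^3*l^3 := by
      calc (q*r*l)^3 ≤ (q*l)^3 := pow_le_pow_left₀ hqrl0 hqrlle 3
        _ = q^3*l^3 := by ring
    have hr2 : (q*r*l)^2 ≤ q^2*l^2 := by
      calc (q*r*l)^2 ≤ (q*l)^2 := pow_le_pow_left₀ hqrl0 hqrlle 2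
        _ = q^2*l^2 := by ring
    have hA1 : 1 ≤ A := one_le_Phi hα hplabs
    have hB1 : 1 ≤ B := one_le_Phi hα hqrlabs
    have hAbound := moment_bound hα hplabs
    have hBbound := moment_bound hα hqrlabs
    rw [← hA, ← hσ2] at hAbound
    rw [← hB, ← hσ2] at hBbound
    rw [abs_of_pos (by positivity : (0:ℝ) < p*l)] at hAbound
    rw [abs_of_nonneg hqrl0] at hBbound
    clear hσ2
    -- apply the hypothesis H
    have hBA : B ^ (1/q) ≤ A ^ (1/p) := by
      have hdiff : DifferentiableOn ℂ (fun z : ℂ => Complex.exp ((l:ℂ) * z)) (ball 0 1) :=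
        (Complex.differentiable_exp.comp ((differentiable_id.const_mul _))).differentiableOn
      have e2 : (fun z : ℂ => ‖Complex.exp ((l:ℂ) * z)‖ ^ p)
          = fun z : ℂ => Real.exp ((p*l) * z.re) := by
        funext z
        rw [hnorm l z, ← Real.exp_mul]
        ring_nf
      have e1 : (fun z : ℂ => ‖Complex.exp ((l:ℂ) * ((r:ℂ) * z))‖ ^ q)
          = fun z : ℂ => Real.exp ((q*r*l) * z.re) := by
        funext z
        rw [hnorm l ((r:ℂ)*z), ← Real.exp_mul]
        have : ((r:ℂ) * z).re = r * z.re := by simp [Complex.mul_re]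
        rw [this]
        ring_nf
      have hint : Integrable (fun z : ℂ => ‖Complex.exp ((l:ℂ) * z)‖ ^ p) (bergmanMeasure α) := by
        rw [e2]
        exact integrable_exp_re hα hplabs
      have happ := H (fun z : ℂ => Complex.exp ((l:ℂ) * z)) hdiff hint
      rw [e1, e2] at happ
      rw [← hA, ← hB] at happ
      exact happ
    clear_value A B
    clear_value D K σ2
    have hApos : (0:ℝ) < A := lt_of_lt_of_le one_pos hA1
    have hBpos : (0:ℝ) < B := lt_of_lt_of_le one_pos hB1
    have hlog : p * Real.log B ≤ q * Real.log A := by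
      have h1 := Real.log_le_log (Real.rpow_pos_of_pos hBpos _) hBA
      rw [Real.log_rpow hBpos, Real.log_rpow hApos] at h1
      rw [one_div_mul_eq_div, one_div_mul_eq_div] at h1
      have h2 := (div_le_div_iff₀ hq hp).mp h1
      linarith [h2]
    -- upper bound on log A
    have hup : Real.log A ≤ (p^2*σ2/2)*l^2 + (2/9*p^3)*l^3 := by
      have h1 : Real.log A ≤ A - 1 := Real.log_le_sub_one_of_pos hApos
      have h2 : A - 1 ≤ (p*l)^2/2*σ2 + 2/9*(p*l)^3 := by
        have := (abs_le.mp hAbound).2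
        linarith
      linarith [h2, h1]
    -- bounds on B - 1
    have hBub : B - 1 ≤ K*l^2 := by
      have h2 := (abs_le.mp hBbound).2
      have s1 : (q*r*l)^2/2*σ2 ≤ q^2*l^2/2*σ2 := by
        have := mul_le_mul_of_nonneg_right hr2 hσpos.le
        linarith
      have s3 : q^3*l^3 ≤ q^3*l^2 := mul_le_mul_of_nonneg_left hl32 (by positivity)
      rw [hK]
      linarith [h2, s1, hr3, s3]
    have hBlb : (q^2*r^2*σ2/2)*l^2 - (2/9*q^3)*l^3 ≤ B - 1 := by
      have h2 := (abs_le.mp hBbound).1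
      linarith [h2, hr3]
    -- lower bound on log B
    have hlogB : (q^2*r^2*σ2/2)*l^2 - (2/9*q^3)*l^3 - K^2*l^3 ≤ Real.log B := by
      have h1 : Real.log B ≥ 1 - 1/B := by
        have h2 := Real.log_le_sub_one_of_pos (show (0:ℝ) < 1/B by positivity)
        rw [Real.log_div one_ne_zero hBpos.ne', Real.log_one] at h2
        linarith
      have h3 : 1 - 1/B - ((B-1) - (B-1)^2) = (B-1)^3/B := by field_simp; ring
      have h4 : (B-1) - (B-1)^2 ≤ 1 - 1/B := by
        rw [← sub_nonneg, h3]
        exact div_nonneg (pow_nonneg (by linarith [hB1]) 3) hBpos.le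
      have h5 : (B-1)^2 ≤ K^2*l^3 := by
        have h6 : (B-1)^2 ≤ (K*l^2)^2 :=
          pow_le_pow_left₀ (by linarith [hB1]) hBub 2
        have h9 : K^2*l^4 ≤ K^2*l^3 := mul_le_mul_of_nonneg_left hl43 (sq_nonneg K)
        have h7 : (K*l^2)^2 = K^2*l^4 := by ring
        linarith [h6, h9]
      linarith [h1, h4, h5, hBlb]
    -- combine
    have hcomb : p*((q^2*r^2*σ2/2)*l^2 - (2/9*q^3)*l^3 - K^2*l^3)
        ≤ q*((p^2*σ2/2)*l^2 + (2/9*p^3)*l^3) := by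
      calc p*((q^2*r^2*σ2/2)*l^2 - (2/9*q^3)*l^3 - K^2*l^3)
          ≤ p * Real.log B := by
            apply mul_le_mul_of_nonneg_left hlogB hp.le
        _ ≤ q * Real.log A := hlog
        _ ≤ q*((p^2*σ2/2)*l^2 + (2/9*p^3)*l^3) := mul_le_mul_of_nonneg_left hup hq.le
    have hfin : (σ2/2)*(p*q)*(q*r^2 - p) * l^2 ≤ (D*l) * l^2 := by
      rw [hD]
      linarith [hcomb]
    exact le_of_mul_le_mul_right hfin (by positivity)
  -- conclude the sign
  clear_value D K σ2
  have hX : (σ2/2)*(p*q)*(q*r^2 - p) ≤ 0 := by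
    by_contra hcon
    push_neg at hcon
    set X : ℝ := (σ2/2)*(p*q)*(q*r^2 - p) with hXdef
    set l : ℝ := min 1 (min (1/q) (X/(2*(D+1)))) with hl
    have hl0 : 0 < l := lt_min one_pos (lt_min (by positivity) (by positivity))
    have hl1 : l ≤ 1 := min_le_left _ _
    have hlq : l ≤ 1/q := le_trans (min_le_right _ _) (min_le_left _ _)
    have hlX : l ≤ X/(2*(D+1)) := le_trans (min_le_right _ _) (min_le_right _ _)
    have hpl : p*l ≤ 1 := by
      calc p*l ≤ p*(1/q) := mul_le_mul_of_nonneg_left hlq hp.le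
        _ = p/q := by ring
        _ ≤ 1 := by rw [div_le_one hq]; exact hpq.le
    have hql : q*l ≤ 1 := by
      calc q*l ≤ q*(1/q) := mul_le_mul_of_nonneg_left hlq hq.le
        _ = 1 := by field_simp
    have h1 : X ≤ D * (X/(2*(D+1))) :=
      le_trans (key l hl0 hl1 hpl hql) (mul_le_mul_of_nonneg_left hlX hD0)
    have h2 : D * (X/(2*(D+1))) < X := by
      have e : D*(X/(2*(D+1))) = D*X/(2*(D+1)) := by ring
      rw [e, div_lt_iff₀ (by positivity)]
      nlinarith [hcon, hD0]
    linarith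
  have hr2 : r^2 ≤ p/q := by
    rw [le_div_iff₀ hq]
    by_contra hcon2
    push_neg at hcon2
    have h1 : 0 < q*r^2 - p := by nlinarith
    have h2 : 0 < σ2/2*(p*q)*(q*r^2-p) :=
      mul_pos (mul_pos (by linarith) (mul_pos hp hq)) h1
    linarith
  calc r = Real.sqrt (r^2) := (Real.sqrt_sq hr0).symm
    _ ≤ Real.sqrt (p/q) := Real.sqrt_le_sqrt hr2
end

section
/- For f(z) = z, the weighted inequality (3) can fail when q < 2: there exist q with 0 < q < 2 and 1 < α < β with α/β = (some r² < 1) such that, with r = √(α/β), ((α−1)/π) ∫_𝔻 |rz|^q (1−|z|²)^{α−2} dA(z) > ((β−1)/π) ∫_𝔻 |z|^q (1−|z|²)^{β−2} dA(z). -/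
open MeasureTheory Metric

lemma disk_radial (g : ℝ → ℝ) :
    ∫ z in ball (0 : ℂ) 1, g ‖z‖ =
      2 * Real.pi * ∫ y in Set.Ioo (0 : ℝ) 1, y * g y := by
  rw [← MeasureTheory.integral_indicator measurableSet_ball]
  have h1 : ∀ z : ℂ, (ball (0 : ℂ) 1).indicator (fun z => g ‖z‖) z
      = (Set.Iio (1 : ℝ)).indicator g ‖z‖ := by
    intro z
    classical
    rw [Set.indicator_apply, Set.indicator_apply]
    simp only [mem_ball_zero_iff, Set.mem_Iio]
  simp_rw [h1]
  rw [MeasureTheory.integral_fun_norm_addHaar volume ((Set.Iio (1 : ℝ)).indicator g)]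
  have hdim : Module.finrank ℝ ℂ = 2 := Complex.finrank_real_complex
  rw [hdim]
  have hvol : (volume (ball (0 : ℂ) 1)).toReal = Real.pi := by
    simp [Complex.volume_ball]
  rw [measureReal_def, hvol]
  have h2 : ∀ y : ℝ, y ^ (2 - 1) • (Set.Iio (1 : ℝ)).indicator g y
      = (Set.Iio (1 : ℝ)).indicator (fun y => y * g y) y := by
    intro y
    by_cases hy : y < 1 <;> simp [Set.indicator_apply, Set.mem_Iio, hy]
  simp_rw [h2]
  rw [MeasureTheory.setIntegral_indicator measurableSet_Iio, Set.Ioi_inter_Iio]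
  simp [smul_eq_mul]
  ring

lemma int1 : ∫ y in Set.Ioo (0 : ℝ) 1, y * (y * (1 - y ^ 2)) = 2 / 15 := by
  rw [← MeasureTheory.integral_Ioc_eq_integral_Ioo,
    ← intervalIntegral.integral_of_le zero_le_one]
  have : ∀ y : ℝ, y * (y * (1 - y ^ 2)) = y ^ 2 - y ^ 4 := fun y => by ring
  simp_rw [this]
  rw [intervalIntegral.integral_sub (intervalIntegral.intervalIntegrable_pow 2)
    (intervalIntegral.intervalIntegrable_pow 4), integral_pow, integral_pow]
  norm_num

lemma int2 : ∫ y in Set.Ioo (0 : ℝ) 1, y * y = 1 / 3 := by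
  rw [← MeasureTheory.integral_Ioc_eq_integral_Ioo,
    ← intervalIntegral.integral_of_le zero_le_one]
  have : ∀ y : ℝ, y * y = y ^ 2 := fun y => by ring
  simp_rw [this]
  rw [integral_pow]
  norm_num

theorem weighted_dilation_inequality_fails_for_small_q :
    ∃ (q α β : ℝ), 0 < q ∧ q < 2 ∧ 1 < α ∧ α < β ∧
      (β - 1) / Real.pi *
          ∫ z in ball (0 : ℂ) 1, ‖z‖ ^ q * (1 - ‖z‖ ^ 2) ^ (β - 2) <
        (α - 1) / Real.pi *
          ∫ z in ball (0 : ℂ) 1,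
            ‖(Real.sqrt (α / β) : ℂ) * z‖ ^ q * (1 - ‖z‖ ^ 2) ^ (α - 2) := by
  refine ⟨1, 2, 3, one_pos, one_lt_two, one_lt_two, by norm_num, ?_⟩
  have hs : (0:ℝ) ≤ Real.sqrt (2/3) := Real.sqrt_nonneg _
  have e1 : ∀ z : ℂ, ‖z‖ ^ (1:ℝ) * (1 - ‖z‖ ^ 2) ^ ((3:ℝ) - 2)
      = (fun y : ℝ => y * (1 - y ^ 2)) ‖z‖ := by
    intro z; norm_num [Real.rpow_one]
  have e2 : ∀ z : ℂ, ‖(Real.sqrt ((2:ℝ)/3) : ℂ) * z‖ ^ (1:ℝ) * (1 - ‖z‖ ^ 2) ^ ((2:ℝ) - 2)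
      = Real.sqrt (2/3) * (fun y : ℝ => y) ‖z‖ := by
    intro z
    rw [show ((2:ℝ) - 2) = 0 by norm_num, Real.rpow_zero, mul_one, Real.rpow_one,
      norm_mul, Complex.norm_real, Real.norm_eq_abs, abs_of_nonneg hs]
  simp_rw [e1, e2]
  rw [disk_radial, disk_radial (fun y : ℝ => y * (1 - y ^ 2)), int1]
  have int2' : ∫ y in Set.Ioo (0 : ℝ) 1, y * (Real.sqrt (2/3) * y)
      = Real.sqrt (2/3) * (1/3) := by
    simp_rw [show ∀ y : ℝ, y * (Real.sqrt (2/3) * y) = Real.sqrt (2/3) * (y * y)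
      from fun y => by ring]
    rw [MeasureTheory.integral_const_mul, int2]
  rw [int2']
  have h45 : (4/5 : ℝ) < Real.sqrt (2/3) :=
    (Real.lt_sqrt (by norm_num)).mpr (by norm_num)
  have hpi := Real.pi_pos
  have hpne : Real.pi ≠ 0 := ne_of_gt hpi
  set s := Real.sqrt (2/3) with hsdef
  have hL : ((3:ℝ) - 1) / Real.pi * (2 * Real.pi * (2/15)) = 8/15 := by
    field_simp; ring
  have hR : ((2:ℝ) - 1) / Real.pi * (2 * Real.pi * (s * (1/3))) = 2/3 * s := by
    field_simp; ring
  rw [hL, hR]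
  nlinarith [h45]
end
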